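/- Let a < b be real numbers and let f : ℝ × ℝ → ℂ be continuous on [a,b] × [a,b]. Define G(x, y) := ∑_{n=1}^∞ f^{∗n}(x, y), the sum of the iterated Volterra powers. Then G solves the linear Volterra integral equation of the second kind with kernel f: for all x, y ∈ [a,b] with y ≤ x, G(x, y) = f(x, y) + ∫_y^x f(x, ζ)·G(ζ, y) dζ. -/

import Mathlib

/-!
The Volterra powers of a kernel bounded by `M` satisfy
`‖f^{∗(n+1)}(x, y)‖ ≤ M^{n+1} (x - y)^n / n!` for `y ≤ x`, so the Neumann series converges,
and dominated convergence lets the Volterra composition with `f` pass through the sum: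
`f ∗ ∑ₙ f^{∗n} = ∑ₙ f^{∗(n+1)}`, which is the series with its first term `f` removed.
A kernel continuous on `[a, b]²` agrees there with the bounded continuous kernel
`f ∘ (projIcc × projIcc)`, and the Volterra powers only see values on `[a, b]²`.
-/

noncomputable def volterraComp (f l : ℝ × ℝ → ℂ) : ℝ × ℝ → ℂ :=
  fun p => ∫ ζ in p.2..p.1, f (p.1, ζ) * l (ζ, p.2)

/-- `volterraPow f n` is the iterated Volterra power `f^{∗(n+1)}`,
so that `volterraPow f 0 = f^{∗1} = f`. -/
noncomputable def volterraPow (f : ℝ × ℝ → ℂ) : ℕ → ℝ × ℝ → ℂ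
  | 0 => f
  | n + 1 => volterraComp f (volterraPow f n)

open MeasureTheory Set intervalIntegral

noncomputable def volterraResolvent (f : ℝ × ℝ → ℂ) : ℝ × ℝ → ℂ :=
  fun p => ∑' n, volterraPow f n p

theorem Continuous.volterraComp {f l : ℝ × ℝ → ℂ} (hf : Continuous f) (hl : Continuous l) :
    Continuous (_root_.volterraComp f l) := by
  have hint : Continuous (Function.uncurry fun (p : ℝ × ℝ) (ζ : ℝ) => f (p.1, ζ) * l (ζ, p.2)) :=
    (hf.comp (by fun_prop)).mul (hl.comp (by fun_prop))
  have hsplit : _root_.volterraComp f l = fun p =>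
      (∫ ζ in (0 : ℝ)..p.1, f (p.1, ζ) * l (ζ, p.2)) - ∫ ζ in (0 : ℝ)..p.2, f (p.1, ζ) * l (ζ, p.2) := by
    funext p
    have hζ : Continuous fun ζ => f (p.1, ζ) * l (ζ, p.2) :=
      hint.comp (continuous_const.prodMk continuous_id)
    exact (integral_interval_sub_left (hζ.intervalIntegrable _ _)
      (hζ.intervalIntegrable _ _)).symm
  rw [hsplit]
  exact (continuous_parametric_intervalIntegral_of_continuous hint continuous_fst).sub
    (continuous_parametric_intervalIntegral_of_continuous hint continuous_snd)

theorem continuous_volterraPow {f : ℝ × ℝ → ℂ} (hf : Continuous f) (n : ℕ) :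
    Continuous (volterraPow f n) := by
  induction n with
  | zero => exact hf
  | succ n ih => exact hf.volterraComp ih

theorem volterraComp_eqOn {s : Set ℝ} [s.OrdConnected] {f f' l l' : ℝ × ℝ → ℂ}
    (hf : EqOn f f' (s ×ˢ s)) (hl : EqOn l l' (s ×ˢ s)) :
    EqOn (volterraComp f l) (volterraComp f' l') (s ×ˢ s) := by
  rintro ⟨x, y⟩ ⟨hx, hy⟩
  refine integral_congr fun ζ hζ => ?_
  have hζs : ζ ∈ s := OrdConnected.uIcc_subset ‹_› hy hx hζ
  simp only [hf (mk_mem_prod hx hζs), hl (mk_mem_prod hζs hy)]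

theorem volterraPow_eqOn {s : Set ℝ} [s.OrdConnected] {f f' : ℝ × ℝ → ℂ}
    (hf : EqOn f f' (s ×ˢ s)) (n : ℕ) :
    EqOn (volterraPow f n) (volterraPow f' n) (s ×ˢ s) := by
  induction n with
  | zero => exact hf
  | succ n ih => exact volterraComp_eqOn hf ih

theorem volterraResolvent_eqOn {s : Set ℝ} [s.OrdConnected] {f f' : ℝ × ℝ → ℂ}
    (hf : EqOn f f' (s ×ˢ s)) :
    EqOn (volterraResolvent f) (volterraResolvent f') (s ×ˢ s) :=
  fun _ hp => tsum_congr fun n => volterraPow_eqOn hf n hp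

section Bounded

variable {f : ℝ × ℝ → ℂ} {M : ℝ}

theorem norm_volterraPow_le (hM : ∀ p, ‖f p‖ ≤ M) (n : ℕ) {x y : ℝ} (hyx : y ≤ x) :
    ‖volterraPow f n (x, y)‖ ≤ M ^ (n + 1) * (x - y) ^ n / n.factorial := by
  induction n generalizing x with
  | zero => simpa [volterraPow] using hM (x, y)
  | succ n ih =>
    have hM0 : 0 ≤ M := (norm_nonneg _).trans (hM 0)
    calc ‖volterraPow f (n + 1) (x, y)‖
        ≤ ∫ ζ in y..x, M ^ (n + 2) / n.factorial * (ζ - y) ^ n := by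
          refine norm_integral_le_of_norm_le hyx (ae_of_all _ fun ζ hζ => ?_)
            (by apply Continuous.intervalIntegrable; fun_prop)
          rw [norm_mul]
          calc ‖f (x, ζ)‖ * ‖volterraPow f n (ζ, y)‖
              ≤ M * (M ^ (n + 1) * (ζ - y) ^ n / n.factorial) :=
                mul_le_mul (hM _) (ih hζ.1.le) (norm_nonneg _) hM0
            _ = M ^ (n + 2) / n.factorial * (ζ - y) ^ n := by ring
      _ = M ^ (n + 2) * (x - y) ^ (n + 1) / (n + 1).factorial := by
          rw [intervalIntegral.integral_const_mul, integral_comp_sub_right (· ^ n), sub_self,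
            integral_pow, Nat.factorial_succ]
          push_cast
          field_simp
          ring

theorem summable_pow_succ_mul_pow_div_factorial (M r : ℝ) :
    Summable fun n : ℕ => M ^ (n + 1) * r ^ n / n.factorial := by
  refine ((Real.summable_pow_div_factorial (M * r)).mul_left M).congr fun n => ?_
  rw [mul_pow, pow_succ]
  ring

theorem hasSum_volterraPow (hM : ∀ p, ‖f p‖ ≤ M) {x y : ℝ} (hyx : y ≤ x) :
    HasSum (fun n => volterraPow f n (x, y)) (volterraResolvent f (x, y)) :=
  (Summable.of_norm_bounded (summable_pow_succ_mul_pow_div_factorial M (x - y))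
    fun n => norm_volterraPow_le hM n hyx).hasSum

theorem hasSum_volterraComp_volterraPow (hf : Continuous f) (hM : ∀ p, ‖f p‖ ≤ M) {x y : ℝ}
    (hyx : y ≤ x) :
    HasSum (fun n => volterraComp f (volterraPow f n) (x, y))
      (volterraComp f (volterraResolvent f) (x, y)) := by
  have hM0 : 0 ≤ M := (norm_nonneg _).trans (hM 0)
  refine hasSum_integral_of_dominated_convergence
    (fun n _ => M * (M ^ (n + 1) * (x - y) ^ n / n.factorial))
    (fun n => ?_) (fun n => ae_of_all _ fun ζ hζ => ?_)
    (ae_of_all _ fun _ _ => (summable_pow_succ_mul_pow_div_factorial M (x - y)).mul_left M)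
    intervalIntegrable_const
    (ae_of_all _ fun ζ hζ => ?_)
  · exact ((hf.comp (by fun_prop)).mul
      ((continuous_volterraPow hf n).comp (by fun_prop))).aestronglyMeasurable
  · rw [uIoc_of_le hyx] at hζ
    rw [norm_mul]
    gcongr
    · exact hM _
    · calc ‖volterraPow f n (ζ, y)‖ ≤ M ^ (n + 1) * (ζ - y) ^ n / n.factorial :=
            norm_volterraPow_le hM n hζ.1.le
        _ ≤ M ^ (n + 1) * (x - y) ^ n / n.factorial := by
            gcongr
            · linarith [hζ.1]
            · exact hζ.2
  · rw [uIoc_of_le hyx] at hζ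
    exact (hasSum_volterraPow hM hζ.1.le).mul_left _

theorem volterraResolvent_eq_add_volterraComp (hf : Continuous f) (hM : ∀ p, ‖f p‖ ≤ M)
    {x y : ℝ} (hyx : y ≤ x) :
    volterraResolvent f (x, y) = f (x, y) + volterraComp f (volterraResolvent f) (x, y) := by
  have h : HasSum (fun n => volterraPow f (n + 1) (x, y))
      (volterraComp f (volterraResolvent f) (x, y)) := hasSum_volterraComp_volterraPow hf hM hyx
  rw [hasSum_nat_add_iff (f := fun n => volterraPow f n (x, y)) 1, Finset.sum_range_one] at h
  exact ((hasSum_volterraPow hM hyx).unique h).trans (add_comm _ _)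

end Bounded

theorem volterraNeumann_solves_integral_equation_general (a b : ℝ) (f : ℝ × ℝ → ℂ)
    (hf : ContinuousOn f (Set.Icc a b ×ˢ Set.Icc a b))
    (G : ℝ × ℝ → ℂ) (hG : G = fun p => ∑' n : ℕ, volterraPow f n p) :
    ∀ x ∈ Set.Icc a b, ∀ y ∈ Set.Icc a b, y ≤ x →
      G (x, y) = f (x, y) + ∫ ζ in y..x, f (x, ζ) * G (ζ, y) := by
  intro x hx y hy hyx
  have hab : a ≤ b := hx.1.trans hx.2
  set F : ℝ × ℝ → ℂ := fun p => f (projIcc a b hab p.1, projIcc a b hab p.2)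
  have hmem : ∀ p : ℝ × ℝ, ((projIcc a b hab p.1 : ℝ), (projIcc a b hab p.2 : ℝ)) ∈
      Icc a b ×ˢ Icc a b := fun p => ⟨(projIcc a b hab p.1).2, (projIcc a b hab p.2).2⟩
  have hF : Continuous F := hf.comp_continuous (by fun_prop) hmem
  have hfF : EqOn f F (Icc a b ×ˢ Icc a b) := by
    rintro ⟨u, v⟩ ⟨hu, hv⟩
    simp only [F, projIcc_of_mem hab hu, projIcc_of_mem hab hv]
  obtain ⟨M, hM⟩ := (isCompact_Icc.prod isCompact_Icc).exists_bound_of_continuousOn hf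
  have hGF : EqOn G (volterraResolvent F) (Icc a b ×ˢ Icc a b) := hG ▸ volterraResolvent_eqOn hfF
  have hxy : (x, y) ∈ Icc a b ×ˢ Icc a b := ⟨hx, hy⟩
  calc G (x, y) = volterraResolvent F (x, y) := hGF hxy
    _ = F (x, y) + volterraComp F (volterraResolvent F) (x, y) :=
        volterraResolvent_eq_add_volterraComp hF (fun p => hM _ (hmem p)) hyx
    _ = f (x, y) + volterraComp f G (x, y) := by
        rw [hfF hxy, volterraComp_eqOn hfF hGF hxy]

/-- The sum of the iterated Volterra powers solves the linear Volterra integral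
equation of the second kind with kernel `f`. -/
theorem volterraNeumann_solves_integral_equation (a b : ℝ) (hab : a < b) (f : ℝ × ℝ → ℂ)
    (hf : ContinuousOn f (Set.Icc a b ×ˢ Set.Icc a b))
    (G : ℝ × ℝ → ℂ) (hG : G = fun p => ∑' n : ℕ, volterraPow f n p) :
    ∀ x ∈ Set.Icc a b, ∀ y ∈ Set.Icc a b, y ≤ x →
      G (x, y) = f (x, y) + ∫ ζ in y..x, f (x, ζ) * G (ζ, y) :=
  volterraNeumann_solves_integral_equation_general a b f hf G hG
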